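/- arXiv:2204.01612 — 3 statements merged into one kernel-verified Lean document; each statement's English description precedes it below -/
import Mathlib

section
/- For any fixed output distribution Q_Y and any β̃ ≤ 0 and distortion level D, the rate function satisfies the lower bound R(Q_Y, D) ≥ β̃D − E_{P_X}[log E_{Q_Y}[exp(β̃ d(X,Y))]], where R(Q_Y, D) = inf over channels P_{Y|X} with E[d(X,Y)] ≤ D of D_KL(P_{X,Y} ‖ P_X ⊗ Q_Y). -/
open Real BigOperators Finset

/-- A probability mass function on a finite alphabet. -/
def IsPMF {α : Type*} [Fintype α] (p : α → ℝ) : Prop :=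
  (∀ a, 0 ≤ p a) ∧ ∑ a, p a = 1

/-- KL divergence between PMFs on a finite alphabet (with the convention `0 log 0 = 0`). -/
noncomputable def klFin {α : Type*} [Fintype α] (p q : α → ℝ) : ℝ :=
  ∑ a, if p a = 0 then 0 else p a * Real.log (p a / q a)

variable {𝓧 𝓨 : Type*} [Fintype 𝓧] [Fintype 𝓨]

/-- A channel (conditional distribution) from `𝓧` to `𝓨`. -/
def IsChannel (W : 𝓧 → 𝓨 → ℝ) : Prop :=
  (∀ x y, 0 ≤ W x y) ∧ ∀ x, ∑ y, W x y = 1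

/-- Expected distortion of a source-channel pair. -/
noncomputable def avgDist (pX : 𝓧 → ℝ) (d : 𝓧 → 𝓨 → ℝ) (W : 𝓧 → 𝓨 → ℝ) : ℝ :=
  ∑ x, ∑ y, pX x * W x y * d x y

/-- The rate function `R(Q_Y, D)`: the infimum of `D_KL(P_{X,Y} ‖ P_X ⊗ Q_Y)` over channels
`P_{Y|X}` with expected distortion at most `D`. -/
noncomputable def rateFun (pX : 𝓧 → ℝ) (Q : 𝓨 → ℝ) (d : 𝓧 → 𝓨 → ℝ) (D : ℝ) : ℝ :=
  sInf { r : ℝ | ∃ W : 𝓧 → 𝓨 → ℝ, IsChannel W ∧ avgDist pX d W ≤ D ∧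
    r = klFin (fun p : 𝓧 × 𝓨 => pX p.1 * W p.1 p.2) (fun p : 𝓧 × 𝓨 => pX p.1 * Q p.2) }

/-- Weak duality for the rate function: for any `β̃ ≤ 0`,
`R(Q_Y, D) ≥ β̃ D − E_{P_X}[log E_{Q_Y}[exp (β̃ d(X,Y))]]`. -/
theorem rateFun_ge_dual (pX : 𝓧 → ℝ) (hpX : IsPMF pX) (Q : 𝓨 → ℝ) (hQ : IsPMF Q)
    (hQpos : ∀ y, 0 < Q y) (d : 𝓧 → 𝓨 → ℝ) (hd : ∀ x y, 0 ≤ d x y) (D : ℝ)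
    (hfeas : ∃ W : 𝓧 → 𝓨 → ℝ, IsChannel W ∧ avgDist pX d W ≤ D)
    (β : ℝ) (hβ : β ≤ 0) :
    β * D - ∑ x, pX x * Real.log (∑ y, Q y * Real.exp (β * d x y))
      ≤ rateFun pX Q d D := by
  obtain ⟨W0, hW0, hD0⟩ := hfeas
  apply le_csInf
  · exact ⟨_, ⟨W0, hW0, hD0, rfl⟩⟩
  rintro r ⟨W, hW, hDW, rfl⟩
  set Z : 𝓧 → ℝ := fun x => ∑ y, Q y * Real.exp (β * d x y) with hZdef
  have hYne : (Finset.univ : Finset 𝓨).Nonempty := by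
    by_contra h
    rw [Finset.not_nonempty_iff_eq_empty] at h
    have h2 := hQ.2
    rw [h] at h2
    simp at h2
  have hZpos : ∀ x, 0 < Z x := fun x =>
    Finset.sum_pos (fun y _ => mul_pos (hQpos y) (Real.exp_pos _)) hYne
  -- pointwise bound
  have hpoint : ∀ x y,
      pX x * W x y * (β * d x y - Real.log (Z x))
        + (pX x * W x y - pX x * (Q y * Real.exp (β * d x y) / Z x))
      ≤ (if pX x * W x y = 0 then 0
          else pX x * W x y * Real.log ((pX x * W x y) / (pX x * Q y))) := by
    intro x y
    by_cases hp : pX x * W x y = 0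
    · rw [hp, if_pos rfl]
      have : 0 ≤ pX x * (Q y * Real.exp (β * d x y) / Z x) :=
        mul_nonneg (hpX.1 x) (div_nonneg (mul_nonneg (hQpos y).le (Real.exp_pos _).le)
          (hZpos x).le)
      nlinarith
    · rw [if_neg hp]
      have hpXpos : 0 < pX x := lt_of_le_of_ne (hpX.1 x) (by
        intro h; exact hp (by rw [← h]; ring))
      have hWpos : 0 < W x y := lt_of_le_of_ne (hW.1 x y) (by
        intro h; exact hp (by rw [← h]; ring))
      have hppos : 0 < pX x * W x y := mul_pos hpXpos hWpos
      set q' : ℝ := pX x * (Q y * Real.exp (β * d x y) / Z x) with hq'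
      have hq'pos : 0 < q' :=
        mul_pos hpXpos (div_pos (mul_pos (hQpos y) (Real.exp_pos _)) (hZpos x))
      -- log(p/q) = log(p/q') + β d - log Z
      have hqpos : 0 < pX x * Q y := mul_pos hpXpos (hQpos y)
      have hlogsplit : Real.log ((pX x * W x y) / (pX x * Q y))
          = Real.log ((pX x * W x y) / q') + (β * d x y - Real.log (Z x)) := by
        rw [Real.log_div (ne_of_gt hppos) (ne_of_gt hqpos),
            Real.log_div (ne_of_gt hppos) (ne_of_gt hq'pos), hq']
        rw [Real.log_mul (ne_of_gt hpXpos)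
              (ne_of_gt (div_pos (mul_pos (hQpos y) (Real.exp_pos _)) (hZpos x))),
            Real.log_mul (ne_of_gt hpXpos) (ne_of_gt (hQpos y)),
            Real.log_div (ne_of_gt (mul_pos (hQpos y) (Real.exp_pos _))) (ne_of_gt (hZpos x)),
            Real.log_mul (ne_of_gt (hQpos y)) (Real.exp_ne_zero _),
            Real.log_exp]
        ring
      -- p log(p/q') ≥ p - q'
      have hgibbs : pX x * W x y - q' ≤ pX x * W x y * Real.log ((pX x * W x y) / q') := by
        have h1 : Real.log (q' / (pX x * W x y)) ≤ q' / (pX x * W x y) - 1 :=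
          Real.log_le_sub_one_of_pos (div_pos hq'pos hppos)
        have h2 : Real.log (q' / (pX x * W x y)) = - Real.log ((pX x * W x y) / q') := by
          rw [← Real.log_inv, inv_div]
        rw [h2] at h1
        have h3 := mul_le_mul_of_nonneg_left h1 (le_of_lt hppos)
        rw [mul_sub, mul_one, mul_div_cancel₀ _ (ne_of_gt hppos)] at h3
        nlinarith
      rw [hlogsplit, mul_add]
      linarith
  -- sum the pointwise bounds
  have hsum : ∑ x, ∑ y, (pX x * W x y * (β * d x y - Real.log (Z x))
        + (pX x * W x y - pX x * (Q y * Real.exp (β * d x y) / Z x)))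
      ≤ klFin (fun p : 𝓧 × 𝓨 => pX p.1 * W p.1 p.2) (fun p : 𝓧 × 𝓨 => pX p.1 * Q p.2) := by
    rw [klFin, Fintype.sum_prod_type]
    exact Finset.sum_le_sum fun x _ => Finset.sum_le_sum fun y _ => hpoint x y
  -- compute the LHS sum
  have hcalc : ∑ x, ∑ y, (pX x * W x y * (β * d x y - Real.log (Z x))
        + (pX x * W x y - pX x * (Q y * Real.exp (β * d x y) / Z x)))
      = β * avgDist pX d W - ∑ x, pX x * Real.log (Z x) := by
    have hx : ∀ x, ∑ y, (pX x * W x y * (β * d x y - Real.log (Z x))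
          + (pX x * W x y - pX x * (Q y * Real.exp (β * d x y) / Z x)))
        = β * (∑ y, pX x * W x y * d x y) - pX x * Real.log (Z x) := by
      intro x
      have e1 : ∑ y, pX x * W x y * (β * d x y - Real.log (Z x))
          = β * (∑ y, pX x * W x y * d x y)
            - (pX x * Real.log (Z x)) * (∑ y, W x y) := by
        rw [Finset.mul_sum, Finset.mul_sum, ← Finset.sum_sub_distrib]
        exact Finset.sum_congr rfl fun y _ => by ring
      have e2 : ∑ y, (pX x * W x y - pX x * (Q y * Real.exp (β * d x y) / Z x))
          = pX x * (∑ y, W x y) - pX x := by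
        rw [Finset.sum_sub_distrib, Finset.mul_sum]
        congr 1
        have h4 : ∑ y, pX x * (Q y * Real.exp (β * d x y) / Z x)
            = pX x / Z x * ∑ y, Q y * Real.exp (β * d x y) := by
          rw [Finset.mul_sum]
          exact Finset.sum_congr rfl fun y _ => by ring
        have hZx : ∑ y, Q y * Real.exp (β * d x y) = Z x := rfl
        rw [h4, hZx, div_mul_cancel₀ _ (ne_of_gt (hZpos x))]
      rw [Finset.sum_add_distrib, e1, e2, hW.2 x]
      ring
    rw [Finset.sum_congr rfl fun x _ => hx x, Finset.sum_sub_distrib, ← Finset.mul_sum,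
      avgDist]
  rw [hcalc] at hsum
  have hβD : β * D ≤ β * avgDist pX d W :=
    mul_le_mul_of_nonpos_left hDW hβ
  calc β * D - ∑ x, pX x * Real.log (Z x)
      ≤ β * avgDist pX d W - ∑ x, pX x * Real.log (Z x) := by linarith
    _ ≤ _ := hsum
end

section
/- The rate function duality holds: R(Q_Y, D) = sup_{β̃ ≤ 0} [ β̃D − E_{P_X}[ log E_{Q_Y}[ exp(β̃ d(X,Y)) ] ] ], where R(Q_Y,D) = inf over channels P_{Y|X} with E_{P_X P_{Y|X}}[d(X,Y)] ≤ D of D_KL(P_X P_{Y|X} ‖ P_X ⊗ Q_Y). -/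
open Real BigOperators Finset

variable {𝓧 𝓨 : Type*} [Fintype 𝓧] [Fintype 𝓨]

/-! For each `x`, the exponentially tilted law `Q_β ∝ Q e^{β d(x,·)}` gives the chain rule
`D(W ‖ Q) = D(W ‖ Q_β) + β E_W[d] - log E_Q[e^{β d}]`, so by Gibbs' inequality every dual value
lies below every primal value once `β ≤ 0` and `E[d] ≤ D`. The tilted channels close the gap:
their distortion is continuous in `β` and drops below `D` as `β → -∞`, since it approaches
`E[min_y d(X,y)] < D`. So either `β = 0` is feasible, or by the intermediate value theorem some
`β < 0` meets the constraint with equality, and at that `β` the two values agree. -/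

lemma mul_exp_neg_mul_le {t : ℝ} (ht : 0 < t) (s : ℝ) : s * Real.exp (-(t * s)) ≤ t⁻¹ := by
  have hts : t * s * Real.exp (-(t * s)) ≤ 1 := by
    calc t * s * Real.exp (-(t * s)) ≤ Real.exp (t * s) * Real.exp (-(t * s)) := by
          gcongr; linarith [Real.add_one_le_exp (t * s)]
      _ = 1 := by rw [← Real.exp_add, add_neg_cancel, Real.exp_zero]
  calc s * Real.exp (-(t * s)) = t⁻¹ * (t * s * Real.exp (-(t * s))) := by field_simp
    _ ≤ t⁻¹ * 1 := by gcongr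
    _ = t⁻¹ := mul_one _

lemma csInf_eq_csSup_of_forall_le_of_mem {α : Type*} [ConditionallyCompleteLattice α]
    {R S : Set α} (h : ∀ r ∈ R, ∀ s ∈ S, s ≤ r) {v : α} (hvR : v ∈ R) (hvS : v ∈ S) :
    sInf R = sSup S := by
  rw [IsLeast.csInf_eq ⟨hvR, fun r hr => h r hr v hvS⟩,
    IsGreatest.csSup_eq ⟨hvS, fun s hs => h v hvR s hs⟩]

section Tilting

variable {α : Type*} [Fintype α]

lemma sub_le_klFin {p q : α → ℝ} (hp : ∀ a, 0 ≤ p a) (hq : ∀ a, 0 < q a) :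
    ∑ a, p a - ∑ a, q a ≤ klFin p q := by
  rw [← Finset.sum_sub_distrib]
  refine Finset.sum_le_sum fun a _ => ?_
  split_ifs with h
  · linarith [h ▸ hq a]
  · have hpa : 0 < p a := (hp a).lt_of_ne' h
    have := mul_le_mul_of_nonneg_left
      (Real.one_sub_inv_le_log_of_pos (div_pos hpa (hq a))) hpa.le
    rwa [inv_div, mul_sub, mul_one, mul_div_cancel₀ _ hpa.ne'] at this

lemma klFin_nonneg {p q : α → ℝ} (hp : IsPMF p) (hq : ∀ a, 0 < q a) (hq1 : ∑ a, q a = 1) :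
    0 ≤ klFin p q := by
  simpa [hp.2, hq1] using sub_le_klFin hp.1 hq

lemma klFin_self (p : α → ℝ) : klFin p p = 0 :=
  Finset.sum_eq_zero fun a _ => by split_ifs with h <;> simp [h]

noncomputable def mgfFin (q c : α → ℝ) (β : ℝ) : ℝ :=
  ∑ a, q a * Real.exp (β * c a)

noncomputable def tiltedFin (q c : α → ℝ) (β : ℝ) (a : α) : ℝ :=
  q a * Real.exp (β * c a) / mgfFin q c β

variable {q : α → ℝ} (c : α → ℝ) (β : ℝ)

lemma mgfFin_pos [Nonempty α] (hq : ∀ a, 0 < q a) : 0 < mgfFin q c β :=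
  Finset.sum_pos (fun a _ => mul_pos (hq a) (Real.exp_pos _)) Finset.univ_nonempty

lemma tiltedFin_pos [Nonempty α] (hq : ∀ a, 0 < q a) (a : α) : 0 < tiltedFin q c β a :=
  div_pos (mul_pos (hq a) (Real.exp_pos _)) (mgfFin_pos c β hq)

lemma sum_tiltedFin [Nonempty α] (hq : ∀ a, 0 < q a) : ∑ a, tiltedFin q c β a = 1 := by
  simp only [tiltedFin, ← Finset.sum_div]
  exact div_self (mgfFin_pos c β hq).ne'

lemma isPMF_tiltedFin [Nonempty α] (hq : ∀ a, 0 < q a) : IsPMF (tiltedFin q c β) :=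
  ⟨fun a => (tiltedFin_pos c β hq a).le, sum_tiltedFin c β hq⟩

lemma log_tiltedFin_div [Nonempty α] (hq : ∀ a, 0 < q a) (a : α) :
    Real.log (tiltedFin q c β a / q a) = β * c a - Real.log (mgfFin q c β) := by
  have : tiltedFin q c β a / q a = Real.exp (β * c a) / mgfFin q c β := by
    simp only [tiltedFin]
    field_simp [(hq a).ne']
  rw [this, Real.log_div (Real.exp_pos _).ne' (mgfFin_pos c β hq).ne', Real.log_exp]

lemma klFin_eq_klFin_tiltedFin_add [Nonempty α] (hq : ∀ a, 0 < q a) {p : α → ℝ}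
    (hp1 : ∑ a, p a = 1) :
    klFin p q = klFin p (tiltedFin q c β) + (β * ∑ a, p a * c a - Real.log (mgfFin q c β)) := by
  have hmean : β * ∑ a, p a * c a - Real.log (mgfFin q c β)
      = ∑ a, p a * (β * c a - Real.log (mgfFin q c β)) := by
    simp only [mul_sub, Finset.sum_sub_distrib, ← Finset.sum_mul, hp1, Finset.mul_sum]
    ring_nf
  rw [hmean, klFin, klFin, ← Finset.sum_add_distrib]
  refine Finset.sum_congr rfl fun a _ => ?_
  split_ifs with h
  · simp [h]
  · have ht := tiltedFin_pos c β hq a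
    rw [← log_tiltedFin_div c β hq a, ← mul_add, ← Real.log_mul (div_ne_zero h ht.ne')
      (div_pos ht (hq a)).ne', div_mul_div_cancel₀ ht.ne']

lemma le_klFin [Nonempty α] (hq : ∀ a, 0 < q a) {p : α → ℝ} (hp : IsPMF p) :
    β * ∑ a, p a * c a - Real.log (mgfFin q c β) ≤ klFin p q := by
  rw [klFin_eq_klFin_tiltedFin_add c β hq hp.2]
  linarith [klFin_nonneg hp (tiltedFin_pos c β hq) (sum_tiltedFin c β hq)]

lemma klFin_tiltedFin [Nonempty α] (hq : ∀ a, 0 < q a) :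
    klFin (tiltedFin q c β) q
      = β * ∑ a, tiltedFin q c β a * c a - Real.log (mgfFin q c β) := by
  rw [klFin_eq_klFin_tiltedFin_add c β hq (sum_tiltedFin c β hq), klFin_self, zero_add]

lemma continuous_tiltedFin [Nonempty α] (hq : ∀ a, 0 < q a) (a : α) :
    Continuous fun β => tiltedFin q c β a := by
  unfold tiltedFin mgfFin
  exact Continuous.div (by fun_prop) (by fun_prop) fun β => (mgfFin_pos c β hq).ne'

/-- Holds for every `a₀`; at a minimiser of `c` it shows that the tilted mean tends to `min c`. -/
lemma sum_tiltedFin_neg_mul_le (hq : ∀ a, 0 < q a) (hq1 : ∑ a, q a = 1) {t : ℝ} (ht : 0 < t)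
    (a₀ : α) : ∑ a, tiltedFin q c (-t) a * c a ≤ c a₀ + (t * q a₀)⁻¹ := by
  have : Nonempty α := ⟨a₀⟩
  set Z := mgfFin q c (-t)
  have hZpos : 0 < Z := mgfFin_pos c _ hq
  have hZ : q a₀ * Real.exp (-t * c a₀) ≤ Z :=
    Finset.single_le_sum (f := fun a => q a * Real.exp (-t * c a))
      (fun a _ => (mul_pos (hq a) (Real.exp_pos _)).le) (Finset.mem_univ a₀)
  have hterm : ∀ a, tiltedFin q c (-t) a * (c a - c a₀)
      ≤ q a * (t⁻¹ * Real.exp (-t * c a₀) / Z) := by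
    intro a
    have hqa := (hq a).le
    have hsplit : Real.exp (-t * c a)
        = Real.exp (-(t * (c a - c a₀))) * Real.exp (-t * c a₀) := by
      rw [← Real.exp_add]; ring_nf
    calc tiltedFin q c (-t) a * (c a - c a₀)
        = q a * ((c a - c a₀) * Real.exp (-(t * (c a - c a₀))) * Real.exp (-t * c a₀)) / Z := by
          rw [tiltedFin, hsplit]; ring
      _ ≤ q a * (t⁻¹ * Real.exp (-t * c a₀)) / Z := by
          gcongr; exact mul_exp_neg_mul_le ht _
      _ = _ := by ring
  calc ∑ a, tiltedFin q c (-t) a * c a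
      = c a₀ + ∑ a, tiltedFin q c (-t) a * (c a - c a₀) := by
        simp only [mul_sub, Finset.sum_sub_distrib, ← Finset.sum_mul, sum_tiltedFin c _ hq]
        ring
    _ ≤ c a₀ + ∑ a, q a * (t⁻¹ * Real.exp (-t * c a₀) / Z) := by
        gcongr 1; exact Finset.sum_le_sum fun a _ => hterm a
    _ = c a₀ + t⁻¹ * Real.exp (-t * c a₀) / Z := by rw [← Finset.sum_mul, hq1, one_mul]
    _ ≤ c a₀ + (t * q a₀)⁻¹ := by
        gcongr
        rw [div_le_iff₀ hZpos]
        calc t⁻¹ * Real.exp (-t * c a₀) = (t * q a₀)⁻¹ * (q a₀ * Real.exp (-t * c a₀)) := by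
              field_simp [(hq a₀).ne']
          _ ≤ (t * q a₀)⁻¹ * Z :=
              mul_le_mul_of_nonneg_left hZ (inv_pos.2 (mul_pos ht (hq a₀))).le

end Tilting

noncomputable def tiltedChannel (Q : 𝓨 → ℝ) (d : 𝓧 → 𝓨 → ℝ) (β : ℝ) : 𝓧 → 𝓨 → ℝ :=
  fun x => tiltedFin Q (d x) β

lemma klFin_joint (pX : 𝓧 → ℝ) (W : 𝓧 → 𝓨 → ℝ) (Q : 𝓨 → ℝ) :
    klFin (fun p : 𝓧 × 𝓨 => pX p.1 * W p.1 p.2) (fun p : 𝓧 × 𝓨 => pX p.1 * Q p.2)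
      = ∑ x, pX x * klFin (W x) Q := by
  simp only [klFin, Fintype.sum_prod_type, Finset.mul_sum]
  refine Finset.sum_congr rfl fun x _ => Finset.sum_congr rfl fun y _ => ?_
  by_cases hx : pX x = 0
  · simp [hx]
  by_cases hw : W x y = 0
  · simp [hw]
  rw [if_neg (mul_ne_zero hx hw), if_neg hw, mul_div_mul_left _ _ hx, mul_assoc]

lemma avgDist_eq_sum_mul (pX : 𝓧 → ℝ) (d W : 𝓧 → 𝓨 → ℝ) :
    avgDist pX d W = ∑ x, pX x * ∑ y, W x y * d x y := by
  simp only [avgDist, Finset.mul_sum, mul_assoc]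

lemma sub_sum_log_mgfFin_le_klFin_joint [Nonempty 𝓨] {pX : 𝓧 → ℝ} (hpX : ∀ x, 0 ≤ pX x)
    {Q : 𝓨 → ℝ} (hQ : ∀ y, 0 < Q y) {d W : 𝓧 → 𝓨 → ℝ} (hW : IsChannel W) {β D : ℝ}
    (hβ : β ≤ 0) (hWD : avgDist pX d W ≤ D) :
    β * D - ∑ x, pX x * Real.log (mgfFin Q (d x) β)
      ≤ klFin (fun p : 𝓧 × 𝓨 => pX p.1 * W p.1 p.2) (fun p : 𝓧 × 𝓨 => pX p.1 * Q p.2) := by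
  calc β * D - ∑ x, pX x * Real.log (mgfFin Q (d x) β)
      ≤ β * avgDist pX d W - ∑ x, pX x * Real.log (mgfFin Q (d x) β) := by
        gcongr ?_ - _
        exact mul_le_mul_of_nonpos_left hWD hβ
    _ = ∑ x, pX x * (β * ∑ y, W x y * d x y - Real.log (mgfFin Q (d x) β)) := by
        rw [avgDist_eq_sum_mul, Finset.mul_sum, ← Finset.sum_sub_distrib]
        exact Finset.sum_congr rfl fun x _ => by ring
    _ ≤ ∑ x, pX x * klFin (W x) Q := by
        gcongr with x
        · exact hpX x
        · exact le_klFin (d x) β hQ ⟨hW.1 x, hW.2 x⟩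
    _ = _ := (klFin_joint pX W Q).symm

section TiltedChannel

variable [Nonempty 𝓨] {Q : 𝓨 → ℝ} (hQ : ∀ y, 0 < Q y) (d : 𝓧 → 𝓨 → ℝ)
include hQ

omit [Fintype 𝓧] in
lemma isChannel_tiltedChannel (β : ℝ) : IsChannel (tiltedChannel Q d β) :=
  ⟨fun x => (isPMF_tiltedFin (d x) β hQ).1, fun x => sum_tiltedFin (d x) β hQ⟩

lemma klFin_joint_tiltedChannel (pX : 𝓧 → ℝ) (β : ℝ) :
    klFin (fun p : 𝓧 × 𝓨 => pX p.1 * tiltedChannel Q d β p.1 p.2)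
        (fun p : 𝓧 × 𝓨 => pX p.1 * Q p.2)
      = β * avgDist pX d (tiltedChannel Q d β)
          - ∑ x, pX x * Real.log (mgfFin Q (d x) β) := by
  rw [klFin_joint, avgDist_eq_sum_mul, Finset.mul_sum, ← Finset.sum_sub_distrib]
  refine Finset.sum_congr rfl fun x _ => ?_
  rw [tiltedChannel, klFin_tiltedFin (d x) β hQ]
  ring

lemma continuous_avgDist_tiltedChannel (pX : 𝓧 → ℝ) :
    Continuous fun β => avgDist pX d (tiltedChannel Q d β) :=
  continuous_finsetSum _ fun x _ => continuous_finsetSum _ fun y _ =>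
    (continuous_const.mul (continuous_tiltedFin (d x) hQ y)).mul continuous_const

lemma avgDist_tiltedChannel_neg_le {pX : 𝓧 → ℝ} (hpX : IsPMF pX) (hQ1 : ∑ y, Q y = 1)
    {t : ℝ} (ht : 0 < t) {y₀ : 𝓨} (hy₀ : ∀ y, Q y₀ ≤ Q y) :
    avgDist pX d (tiltedChannel Q d (-t)) ≤ ∑ x, pX x * (⨅ y, d x y) + (t * Q y₀)⁻¹ := by
  have hx : ∀ x, ∑ y, tiltedChannel Q d (-t) x y * d x y ≤ (⨅ y, d x y) + (t * Q y₀)⁻¹ := by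
    intro x
    obtain ⟨y, hy⟩ := exists_eq_ciInf_of_finite (f := d x)
    calc ∑ y, tiltedChannel Q d (-t) x y * d x y ≤ d x y + (t * Q y)⁻¹ :=
          sum_tiltedFin_neg_mul_le (d x) hQ hQ1 ht y
      _ ≤ (⨅ y, d x y) + (t * Q y₀)⁻¹ := by
          rw [hy]
          have := hQ y₀
          gcongr
          exact hy₀ y
  calc avgDist pX d (tiltedChannel Q d (-t))
      ≤ ∑ x, pX x * ((⨅ y, d x y) + (t * Q y₀)⁻¹) := by
        rw [avgDist_eq_sum_mul]
        gcongr with x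
        · exact hpX.1 x
        · exact hx x
    _ = ∑ x, pX x * (⨅ y, d x y) + (t * Q y₀)⁻¹ := by
        simp only [mul_add, Finset.sum_add_distrib, ← Finset.sum_mul, hpX.2, one_mul]

lemma exists_avgDist_tiltedChannel_le {pX : 𝓧 → ℝ} (hpX : IsPMF pX) (hQ1 : ∑ y, Q y = 1)
    {D : ℝ} (hD : ∑ x, pX x * (⨅ y, d x y) < D) :
    ∃ β ≤ 0, avgDist pX d (tiltedChannel Q d β) ≤ D := by
  obtain ⟨y₀, hy₀⟩ := Finite.exists_min Q
  have hε : 0 < D - ∑ x, pX x * (⨅ y, d x y) := sub_pos.2 hD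
  have ht : 0 < ((D - ∑ x, pX x * (⨅ y, d x y)) * Q y₀)⁻¹ := by
    have := hQ y₀
    positivity
  refine ⟨_, neg_nonpos.2 ht.le,
    (avgDist_tiltedChannel_neg_le hQ d hpX hQ1 ht hy₀).trans_eq ?_⟩
  field_simp [(hQ y₀).ne']
  ring

lemma exists_tiltedChannel_optimal {pX : 𝓧 → ℝ} (hpX : IsPMF pX) (hQ1 : ∑ y, Q y = 1)
    {D : ℝ} (hD : ∑ x, pX x * (⨅ y, d x y) < D) :
    ∃ β ≤ 0, avgDist pX d (tiltedChannel Q d β) ≤ D ∧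
      β * avgDist pX d (tiltedChannel Q d β) = β * D := by
  by_cases h0 : avgDist pX d (tiltedChannel Q d 0) ≤ D
  · exact ⟨0, le_rfl, h0, by rw [zero_mul, zero_mul]⟩
  obtain ⟨β₀, hβ₀, hβ₀D⟩ := exists_avgDist_tiltedChannel_le hQ d hpX hQ1 hD
  obtain ⟨β, hβ, hβD⟩ := intermediate_value_Icc hβ₀
    (continuous_avgDist_tiltedChannel hQ d pX).continuousOn ⟨hβ₀D, (not_le.1 h0).le⟩
  exact ⟨β, hβ.2, hβD.le, congrArg (β * ·) hβD⟩

end TiltedChannel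

theorem rateFun_duality_general [Nonempty 𝓨] (pX : 𝓧 → ℝ) (hpX : IsPMF pX) (Q : 𝓨 → ℝ) (hQ : IsPMF Q)
    (hQpos : ∀ y, 0 < Q y) (d : 𝓧 → 𝓨 → ℝ)
    (D : ℝ) (hDint : (∑ x, pX x * ⨅ y, d x y) < D) :
    rateFun pX Q d D
      = sSup { s : ℝ | ∃ β : ℝ, β ≤ 0 ∧
          s = β * D - ∑ x, pX x * Real.log (∑ y, Q y * Real.exp (β * d x y)) } := by
  obtain ⟨β, hβ, hβD, hslack⟩ := exists_tiltedChannel_optimal hQpos d hpX hQ.2 hDint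
  refine csInf_eq_csSup_of_forall_le_of_mem ?weak
    ⟨tiltedChannel Q d β, isChannel_tiltedChannel hQpos d β, hβD, ?attained⟩ ⟨β, hβ, rfl⟩
  case weak =>
    rintro r ⟨W, hW, hWD, rfl⟩ s ⟨β', hβ', rfl⟩
    exact sub_sum_log_mgfFin_le_klFin_joint hpX.1 hQpos hW hβ' hWD
  case attained =>
    rw [klFin_joint_tiltedChannel hQpos, hslack]
    rfl

/-- Rate function duality (Dembo–Kontoyiannis):
`R(Q_Y, D) = sup_{β̃ ≤ 0} [ β̃ D − E_{P_X}[log E_{Q_Y}[exp (β̃ d(X,Y))]] ]`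
for `D` in the interior of the achievable distortion range. -/
theorem rateFun_duality [Nonempty 𝓨] (pX : 𝓧 → ℝ) (hpX : IsPMF pX) (Q : 𝓨 → ℝ) (hQ : IsPMF Q)
    (hQpos : ∀ y, 0 < Q y) (d : 𝓧 → 𝓨 → ℝ) (hd : ∀ x y, 0 ≤ d x y)
    (D : ℝ) (hD0 : 0 < D) (hDint : (∑ x, pX x * ⨅ y, d x y) < D) :
    rateFun pX Q d D
      = sSup { s : ℝ | ∃ β : ℝ, β ≤ 0 ∧
          s = β * D - ∑ x, pX x * Real.log (∑ y, Q y * Real.exp (β * d x y)) } :=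
  rateFun_duality_general pX hpX Q hQ hQpos d D hDint
end

section
/- For finite alphabets, given Q_Y and β > 0, the channel p(y|x) = r(y)exp(−β d(x,y)) / Σ_{ỹ} r(ỹ)exp(−β d(x,ỹ)) minimizes the functional D_KL(P_{X,Y} ‖ P_X ⊗ Q_Y) + β E_{P_{X,Y}}[d(X,Y)] over all channels P_{Y|X}, where r = Q_Y. -/
open Real BigOperators Finset

variable {𝓧 𝓨 : Type*} [Fintype 𝓧] [Fintype 𝓨]

/-- Gibbs' inequality on a finite alphabet. -/
lemma klFin_nonneg_of_sum_eq {α : Type*} [Fintype α] (p q : α → ℝ) (hp : ∀ a, 0 ≤ p a)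
    (hq : ∀ a, 0 < q a) (h : ∑ a, p a = ∑ a, q a) : 0 ≤ klFin p q := by
  have key : ∀ a : α, p a - q a ≤ (if p a = 0 then 0 else p a * Real.log (p a / q a)) := by
    intro a
    by_cases hpa : p a = 0
    · simp [hpa, (hq a).le]
    · have hppos : 0 < p a := lt_of_le_of_ne (hp a) (Ne.symm hpa)
      rw [if_neg hpa]
      have h1 : Real.log (q a / p a) ≤ q a / p a - 1 :=
        Real.log_le_sub_one_of_pos (div_pos (hq a) hppos)
      have h2 : Real.log (p a / q a) = - Real.log (q a / p a) := by
        rw [← Real.log_inv]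
        congr 1
        rw [inv_div]
      have h3 : p a * (q a / p a) = q a := by field_simp
      have h4 : p a * (1 - q a / p a) ≤ p a * (- Real.log (q a / p a)) :=
        mul_le_mul_of_nonneg_left (by linarith) hppos.le
      nlinarith [h4]
  have hsum : ∑ a, (p a - q a) ≤ ∑ a, (if p a = 0 then 0 else p a * Real.log (p a / q a)) :=
    Finset.sum_le_sum fun a _ => key a
  rw [Finset.sum_sub_distrib, h, sub_self] at hsum
  unfold klFin
  exact hsum

/-- Per-source-symbol identity: the conditional functional equals a KL divergence to the
Boltzmann distribution minus the log-partition function. -/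
lemma perx_ident {𝓨 : Type*} [Fintype 𝓨] (r : 𝓨 → ℝ) (hr : ∀ y, 0 < r y)
    (δ : 𝓨 → ℝ) (β : ℝ) (w : 𝓨 → ℝ) (hw0 : ∀ y, 0 ≤ w y) (hw1 : ∑ y, w y = 1) :
    (∑ y, if w y = 0 then 0 else w y * Real.log (w y / r y)) + β * ∑ y, w y * δ y
      = klFin w (fun y => r y * Real.exp (-β * δ y) / ∑ y' : 𝓨, r y' * Real.exp (-β * δ y'))
        - Real.log (∑ y' : 𝓨, r y' * Real.exp (-β * δ y')) := by
  have hne : (Finset.univ : Finset 𝓨).Nonempty := by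
    rcases Finset.eq_empty_or_nonempty (Finset.univ : Finset 𝓨) with h | h
    · rw [h, Finset.sum_empty] at hw1; norm_num at hw1
    · exact h
  set Z : ℝ := ∑ y' : 𝓨, r y' * Real.exp (-β * δ y') with hZdef
  have hZpos : 0 < Z :=
    Finset.sum_pos (fun y _ => mul_pos (hr y) (Real.exp_pos _)) hne
  have hlog : ∀ y, (if w y = 0 then 0 else
        w y * Real.log (w y / (r y * Real.exp (-β * δ y) / Z)))
      = (if w y = 0 then 0 else w y * Real.log (w y / r y)) + β * (w y * δ y)
        + w y * Real.log Z := by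
    intro y
    by_cases hwy : w y = 0
    · simp [hwy]
    · rw [if_neg hwy, if_neg hwy]
      have hwpos : 0 < w y := lt_of_le_of_ne (hw0 y) (Ne.symm hwy)
      have hdiv : w y / (r y * Real.exp (-β * δ y) / Z)
          = (w y / r y) * Real.exp (β * δ y) * Z := by
        rw [show -β * δ y = -(β * δ y) by ring, Real.exp_neg]
        field_simp
      rw [hdiv]
      have h1 : (0:ℝ) < w y / r y := div_pos hwpos (hr y)
      rw [Real.log_mul (by positivity) hZpos.ne', Real.log_mul h1.ne' (Real.exp_ne_zero _),
        Real.log_exp]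
      ring
  unfold klFin
  rw [Finset.sum_congr rfl (fun y _ => hlog y), Finset.sum_add_distrib,
    Finset.sum_add_distrib, ← Finset.mul_sum, ← Finset.sum_mul, hw1, one_mul]
  ring

/-- Per-source-symbol optimality bound. -/
lemma perx_bound {𝓨 : Type*} [Fintype 𝓨] (r : 𝓨 → ℝ) (hr : ∀ y, 0 < r y)
    (δ : 𝓨 → ℝ) (β : ℝ) (w : 𝓨 → ℝ) (hw0 : ∀ y, 0 ≤ w y) (hw1 : ∑ y, w y = 1) :
    -Real.log (∑ y' : 𝓨, r y' * Real.exp (-β * δ y'))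
      ≤ (∑ y, if w y = 0 then 0 else w y * Real.log (w y / r y)) + β * ∑ y, w y * δ y := by
  have hne : (Finset.univ : Finset 𝓨).Nonempty := by
    rcases Finset.eq_empty_or_nonempty (Finset.univ : Finset 𝓨) with h | h
    · rw [h, Finset.sum_empty] at hw1; norm_num at hw1
    · exact h
  have hZpos : 0 < ∑ y' : 𝓨, r y' * Real.exp (-β * δ y') :=
    Finset.sum_pos (fun y _ => mul_pos (hr y) (Real.exp_pos _)) hne
  have hwpos : ∀ y, 0 < r y * Real.exp (-β * δ y) / ∑ y' : 𝓨, r y' * Real.exp (-β * δ y') :=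
    fun y => div_pos (mul_pos (hr y) (Real.exp_pos _)) hZpos
  have hwsum : ∑ y, r y * Real.exp (-β * δ y) / ∑ y' : 𝓨, r y' * Real.exp (-β * δ y') = 1 := by
    rw [← Finset.sum_div, div_self hZpos.ne']
  have hkl : 0 ≤ klFin w
      (fun y => r y * Real.exp (-β * δ y) / ∑ y' : 𝓨, r y' * Real.exp (-β * δ y')) :=
    klFin_nonneg_of_sum_eq _ _ hw0 hwpos (by rw [hw1, hwsum])
  rw [perx_ident r hr δ β w hw0 hw1]
  linarith

/-- Blahut–Arimoto channel-update optimality: for `β > 0` and output PMF `r`, the channel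
`p(y|x) = r(y) exp(−β d(x,y)) / ∑_ỹ r(ỹ) exp(−β d(x,ỹ))` minimizes
`D_KL(P_{X,Y} ‖ P_X ⊗ r) + β E[d(X,Y)]` over all channels. -/
theorem BA_channel_step_optimal (pX : 𝓧 → ℝ) (hpX : IsPMF pX) (r : 𝓨 → ℝ) (hr : IsPMF r)
    (hrpos : ∀ y, 0 < r y) (d : 𝓧 → 𝓨 → ℝ) (hd : ∀ x y, 0 ≤ d x y) (β : ℝ) (hβ : 0 < β) :
    IsChannel (fun x y => r y * Real.exp (-β * d x y)
        / ∑ y', r y' * Real.exp (-β * d x y')) ∧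
    ∀ W : 𝓧 → 𝓨 → ℝ, IsChannel W →
      klFin (fun p : 𝓧 × 𝓨 => pX p.1 *
            (r p.2 * Real.exp (-β * d p.1 p.2) / ∑ y', r y' * Real.exp (-β * d p.1 y')))
          (fun p : 𝓧 × 𝓨 => pX p.1 * r p.2)
        + β * avgDist pX d (fun x y => r y * Real.exp (-β * d x y)
            / ∑ y', r y' * Real.exp (-β * d x y'))
      ≤ klFin (fun p : 𝓧 × 𝓨 => pX p.1 * W p.1 p.2) (fun p : 𝓧 × 𝓨 => pX p.1 * r p.2)
          + β * avgDist pX d W := by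
  have hne : (Finset.univ : Finset 𝓨).Nonempty := by
    rcases Finset.eq_empty_or_nonempty (Finset.univ : Finset 𝓨) with h | h
    · have := hr.2; rw [h, Finset.sum_empty] at this; norm_num at this
    · exact h
  have hZpos : ∀ x : 𝓧, 0 < ∑ y' : 𝓨, r y' * Real.exp (-β * d x y') :=
    fun x => Finset.sum_pos (fun y _ => mul_pos (hrpos y) (Real.exp_pos _)) hne
  -- the Boltzmann channel
  set Wstar : 𝓧 → 𝓨 → ℝ := fun x y =>
    r y * Real.exp (-β * d x y) / ∑ y' : 𝓨, r y' * Real.exp (-β * d x y') with hWstar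
  have hWstarPos : ∀ x y, 0 < Wstar x y :=
    fun x y => div_pos (mul_pos (hrpos y) (Real.exp_pos _)) (hZpos x)
  have hWstarSum : ∀ x, ∑ y, Wstar x y = 1 := by
    intro x
    rw [hWstar]
    simp only
    rw [← Finset.sum_div, div_self (hZpos x).ne']
  have hchan : IsChannel Wstar := ⟨fun x y => (hWstarPos x y).le, hWstarSum⟩
  refine ⟨hchan, ?_⟩
  intro W hW
  -- decomposition of the functional as a sum over x
  have decomp : ∀ V : 𝓧 → 𝓨 → ℝ,
      klFin (fun p : 𝓧 × 𝓨 => pX p.1 * V p.1 p.2) (fun p : 𝓧 × 𝓨 => pX p.1 * r p.2)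
        + β * avgDist pX d V
      = ∑ x, pX x * ((∑ y, if V x y = 0 then 0 else V x y * Real.log (V x y / r y))
          + β * ∑ y, V x y * d x y) := by
    intro V
    unfold klFin avgDist
    rw [Fintype.sum_prod_type, Finset.mul_sum, ← Finset.sum_add_distrib]
    refine Finset.sum_congr rfl fun x _ => ?_
    by_cases hx : pX x = 0
    · simp [hx]
    · have hterm : ∀ y, (if pX x * V x y = 0 then 0 else
          pX x * V x y * Real.log (pX x * V x y / (pX x * r y)))
          = pX x * (if V x y = 0 then 0 else V x y * Real.log (V x y / r y)) := by
        intro y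
        by_cases hv : V x y = 0
        · simp [hv]
        · rw [if_neg hv, if_neg (mul_ne_zero hx hv), mul_div_mul_left _ _ hx]
          ring
      rw [Finset.sum_congr rfl fun y _ => hterm y, ← Finset.mul_sum]
      rw [show ∑ y, pX x * V x y * d x y = pX x * ∑ y, V x y * d x y by
        rw [Finset.mul_sum]; exact Finset.sum_congr rfl fun y _ => by ring]
      ring
  rw [decomp W, decomp Wstar]
  -- lower bound each x-term; the Boltzmann channel attains it
  have hstar_eq : ∀ x, (∑ y, if Wstar x y = 0 then 0 else
        Wstar x y * Real.log (Wstar x y / r y)) + β * ∑ y, Wstar x y * d x y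
      = -Real.log (∑ y' : 𝓨, r y' * Real.exp (-β * d x y')) := by
    intro x
    have hid := perx_ident r hrpos (d x) β (Wstar x) (fun y => (hWstarPos x y).le)
      (hWstarSum x)
    have hklzero : klFin (Wstar x)
        (fun y => r y * Real.exp (-β * d x y) / ∑ y' : 𝓨, r y' * Real.exp (-β * d x y')) = 0 := by
      unfold klFin
      refine Finset.sum_eq_zero fun y _ => ?_
      rw [if_neg (hWstarPos x y).ne']
      have : Wstar x y / (r y * Real.exp (-β * d x y) / ∑ y' : 𝓨, r y' * Real.exp (-β * d x y'))
          = 1 := div_self (hWstarPos x y).ne'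
      rw [this, Real.log_one, mul_zero]
    rw [hid, hklzero, zero_sub]
  refine Finset.sum_le_sum fun x _ => ?_
  rw [hstar_eq x]
  exact mul_le_mul_of_nonneg_left
    (perx_bound r hrpos (d x) β (W x) (fun y => hW.1 x y) (hW.2 x)) (hpX.1 x)
end
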